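/- arXiv:2307.11668 — 5 statements merged into one kernel-verified Lean document; each statement's English description precedes it below -/
import Mathlib

section
/- Let R be a thrice-differentiable self-concordant barrier function on the interior of a compact convex set K ⊂ ℝⁿ with diameter Δ (i.e., R(x) tends to infinity as x approaches the boundary of K, and for every x in int K and direction h, the function t ↦ R(x+th) satisfies |f'''(0)| ≤ 2 f''(0)^{3/2}). Then for every x in int K, every eigenvalue of the Hessian ∇²R(x) is at least 1/Δ². -/
/-!
Let `f t = R (x + t • u)` and let `b ≤ diam K` be the time at which the ray leaves `int K`.
On `[0, b)`, `g = f''` satisfies `g' ≤ 2 g^{3/2}`, whose solution `1 / (s - t)²` blows up only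
at `t = s`. If `g 0 < 1 / b²` we can pick `s > b` with `g 0 < 1 / s²`, so `g` is trapped below
this solution and stays bounded on `[0, b)`; integrating twice, so does `f`. This contradicts
the barrier property at the boundary point `x + b • u`.
-/

open Set Filter Topology

theorem rpow_three_halves_eq_sqrt_pow {x : ℝ} (hx : 0 ≤ x) :
    x ^ ((3 : ℝ) / 2) = √x ^ 3 := by
  rw [show (3 : ℝ) / 2 = 1 / 2 * 3 by norm_num, Real.rpow_mul hx, Real.sqrt_eq_rpow,
    Real.rpow_ofNat]

theorem two_mul_add_rpow_three_halves_le {p d A : ℝ} (hp : 0 ≤ p) (hd : 0 ≤ d)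
    (hA : p + d ≤ A) :
    2 * (p + d) ^ ((3 : ℝ) / 2) ≤ 2 * p ^ ((3 : ℝ) / 2) + 3 * √A * d := by
  rw [rpow_three_halves_eq_sqrt_pow hp, rpow_three_halves_eq_sqrt_pow (by positivity)]
  have hd_eq : d = √(p + d) ^ 2 - √p ^ 2 := by
    rw [Real.sq_sqrt hp, Real.sq_sqrt (add_nonneg hp hd)]
    ring
  have hcubic : 2 * √(p + d) ^ 3 ≤ 2 * √p ^ 3 + 3 * √(p + d) * (√(p + d) ^ 2 - √p ^ 2) := by
    -- with `a = √p`, `q = √(p + d)`: `2a³ + 3q(q² - a²) - 2q³ = (q - a)²(q + 2a)`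
    nlinarith [mul_nonneg (sq_nonneg (√(p + d) - √p)) (by positivity : 0 ≤ √(p + d) + 2 * √p)]
  rw [← hd_eq] at hcubic
  nlinarith [mul_le_mul_of_nonneg_right (Real.sqrt_le_sqrt hA) hd]

theorem hasDerivAt_inv_sq_sub {s t : ℝ} (ht : t < s) :
    HasDerivAt (fun τ => ((s - τ) ^ 2)⁻¹) (2 * ((s - t) ^ 2)⁻¹ ^ ((3 : ℝ) / 2)) t := by
  have hst : 0 < s - t := sub_pos.mpr ht
  have h := (((hasDerivAt_id t).const_sub s).pow 2).inv (pow_ne_zero 2 hst.ne')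
  rw [rpow_three_halves_eq_sqrt_pow (by positivity), Real.sqrt_inv, Real.sqrt_sq hst.le]
  refine h.congr_deriv ?_
  simp only [id, Pi.pow_apply]
  field_simp
  ring

theorem ContDiffOn.hasDerivAt_iteratedDeriv {𝕜 F : Type*} [NontriviallyNormedField 𝕜]
    [NormedAddCommGroup F] [NormedSpace 𝕜 F] {f : 𝕜 → F} {s : Set 𝕜} {n : WithTop ℕ∞}
    {m : ℕ} (hf : ContDiffOn 𝕜 n f s) (hs : IsOpen s) (hmn : m < n) {x : 𝕜} (hx : x ∈ s) :
    HasDerivAt (iteratedDeriv m f) (iteratedDeriv (m + 1) f x) x := by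
  have hdiff := (hf.differentiableOn_iteratedDerivWithin hmn hs.uniqueDiffOn).differentiableAt
    (hs.mem_nhds hx)
  have heq : iteratedDerivWithin m f s =ᶠ[𝓝 x] iteratedDeriv m f :=
    eventually_of_mem (hs.mem_nhds hx) fun y hy => iteratedDerivWithin_of_isOpen hs hy
  rw [iteratedDeriv_succ]
  exact (heq.differentiableAt_iff.mp hdiff).hasDerivAt

theorem iteratedDeriv_comp_add_smul_shift {E F : Type*} [NormedAddCommGroup E]
    [NormedSpace ℝ E] [NormedAddCommGroup F] [NormedSpace ℝ F] (R : E → F) (x u : E)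
    (t : ℝ) (k : ℕ) :
    iteratedDeriv k (fun s : ℝ => R (x + t • u + s • u)) 0 =
      iteratedDeriv k (fun s : ℝ => R (x + s • u)) t := by
  have : (fun s : ℝ => R (x + t • u + s • u)) = fun s => R (x + (t + s) • u) := by
    ext s
    rw [add_smul, add_assoc]
  rw [this, iteratedDeriv_comp_const_add (f := fun s : ℝ => R (x + s • u))]
  simp only [add_zero]

theorem bddAbove_image_Ico_of_hasDerivAt {φ φ' : ℝ → ℝ} {a b : ℝ}
    (hφ : ∀ t ∈ Ico a b, HasDerivAt φ (φ' t) t) (hφ' : BddAbove (φ' '' Ico a b)) :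
    BddAbove (φ '' Ico a b) := by
  obtain ⟨M, hM⟩ := hφ'
  refine ⟨φ a + |M| * (b - a), ?_⟩
  rintro _ ⟨t, ht, rfl⟩
  have hsub : Icc a t ⊆ Ico a b := Icc_subset_Ico_right ht.2
  have hlin : φ t ≤ φ a + M * (t - a) :=
    image_le_of_deriv_right_le_deriv_boundary (B := fun x => φ a + M * (x - a))
      (fun x hx => (hφ x (hsub hx)).continuousAt.continuousWithinAt)
      (fun x hx => (hφ x (hsub (Ico_subset_Icc_self hx))).hasDerivWithinAt)
      (by simp) (by fun_prop)
      (fun x _ => ((((hasDerivAt_id x).sub_const a).const_mul M).const_add _).hasDerivWithinAt)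
      (fun x hx => by simpa using hM ⟨x, hsub (Ico_subset_Icc_self hx), rfl⟩)
      ⟨ht.1, le_rfl⟩
  have hMt : M * (t - a) ≤ |M| * (b - a) :=
    mul_le_mul (le_abs_self M) (by linarith [ht.2]) (by linarith [ht.1]) (abs_nonneg M)
  linarith

theorem le_of_hasDerivAt_le_two_mul_rpow_three_halves {g g' : ℝ → ℝ} {b s : ℝ} (hbs : b < s)
    (hg : ∀ t ∈ Ico 0 b, HasDerivAt g (g' t) t)
    (hg' : ∀ t ∈ Ico 0 b, g' t ≤ 2 * g t ^ ((3 : ℝ) / 2))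
    (h0 : g 0 < (s ^ 2)⁻¹) :
    ∀ t ∈ Ico 0 b, g t ≤ ((s - b) ^ 2)⁻¹ + 1 := by
  set A := ((s - b) ^ 2)⁻¹ + 1
  set L := 3 * √A + 1
  -- `1 / (s - t)²` solves `y' = 2 y^{3/2}`; the small exponential makes the comparison strict
  set ψ : ℝ → ℝ := fun t => ((s - t) ^ 2)⁻¹ + Real.exp (L * (t - b))
  set ψ' : ℝ → ℝ := fun t => 2 * ((s - t) ^ 2)⁻¹ ^ ((3 : ℝ) / 2) + L * Real.exp (L * (t - b))
  have hψ : ∀ t < s, HasDerivAt ψ (ψ' t) t := fun t ht =>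
    (hasDerivAt_inv_sq_sub ht).add <|
      (((hasDerivAt_id t).sub_const b).const_mul L).exp.congr_deriv (by simp [mul_comm])
  have hψ_le : ∀ t ∈ Ico 0 b, ((s - t) ^ 2)⁻¹ ≤ ((s - b) ^ 2)⁻¹ ∧ Real.exp (L * (t - b)) ≤ 1 :=
    fun t ht => ⟨inv_anti₀ (by nlinarith) (by nlinarith [ht.2]),
      Real.exp_le_one_iff.mpr
        (mul_nonpos_of_nonneg_of_nonpos (by positivity) (by linarith [ht.2]))⟩
  intro τ hτ
  have hsub : Icc 0 τ ⊆ Ico 0 b := Icc_subset_Ico_right hτ.2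
  have hgψ : g τ ≤ ψ τ := by
    refine image_le_of_deriv_right_lt_deriv_boundary' (f' := g') (B' := ψ')
      (fun t ht => (hg t (hsub ht)).continuousAt.continuousWithinAt)
      (fun t ht => (hg t (hsub (Ico_subset_Icc_self ht))).hasDerivWithinAt)
      (by simp only [ψ, sub_zero]; linarith [Real.exp_pos (L * (0 - b))])
      (fun t ht => (hψ t (by linarith [(hsub ht).2])).continuousAt.continuousWithinAt)
      (fun t ht => (hψ t (by linarith [(hsub (Ico_subset_Icc_self ht)).2])).hasDerivWithinAt)
      (fun t ht hgt => ?_) ⟨hτ.1, le_rfl⟩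
    have ht := hsub (Ico_subset_Icc_self ht)
    obtain ⟨hp, hd⟩ := hψ_le t ht
    have hdpos := Real.exp_pos (L * (t - b))
    calc g' t ≤ 2 * (((s - t) ^ 2)⁻¹ + Real.exp (L * (t - b))) ^ ((3 : ℝ) / 2) :=
        (hg' t ht).trans_eq (by rw [hgt])
      _ ≤ 2 * ((s - t) ^ 2)⁻¹ ^ ((3 : ℝ) / 2) + 3 * √A * Real.exp (L * (t - b)) :=
        two_mul_add_rpow_three_halves_le (by positivity) hdpos.le (by linarith)
      _ < ψ' t := by simp only [ψ', L]; nlinarith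
  linarith [hψ_le τ hτ]

theorem exists_gt_lt_inv_sq {y b : ℝ} (hb : 0 < b) (hy : y < (b ^ 2)⁻¹) :
    ∃ s, b < s ∧ y < (s ^ 2)⁻¹ := by
  have hcont : ContinuousAt (fun s : ℝ => (s ^ 2)⁻¹) b := by fun_prop (disch := positivity)
  exact (((hcont.eventually (lt_mem_nhds hy)).filter_mono nhdsWithin_le_nhds).and
    (self_mem_nhdsWithin : Ioi b ∈ 𝓝[>] b)).exists.imp fun s hs => ⟨hs.2, hs.1⟩

theorem bddAbove_image_Ico_of_selfConcordant {f f₁ f₂ f₃ : ℝ → ℝ} {b : ℝ} (hb : 0 < b)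
    (hf : ∀ t ∈ Ico 0 b, HasDerivAt f (f₁ t) t) (hf₁ : ∀ t ∈ Ico 0 b, HasDerivAt f₁ (f₂ t) t)
    (hf₂ : ∀ t ∈ Ico 0 b, HasDerivAt f₂ (f₃ t) t)
    (hSC : ∀ t ∈ Ico 0 b, f₃ t ≤ 2 * f₂ t ^ ((3 : ℝ) / 2)) (h0 : f₂ 0 < (b ^ 2)⁻¹) :
    BddAbove (f '' Ico 0 b) := by
  obtain ⟨s, hbs, hs⟩ := exists_gt_lt_inv_sq hb h0
  have hf₂_bdd : BddAbove (f₂ '' Ico 0 b) := ⟨_, forall_mem_image.mpr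
    (le_of_hasDerivAt_le_two_mul_rpow_three_halves hbs hf₂ hSC hs)⟩
  exact bddAbove_image_Ico_of_hasDerivAt hf (bddAbove_image_Ico_of_hasDerivAt hf₁ hf₂_bdd)

theorem exists_frontier_mem_ray {E : Type*} [NormedAddCommGroup E] [NormedSpace ℝ E]
    {K : Set E} (hK : Bornology.IsBounded K) {x u : E} (hx : x ∈ interior K) (hu : ‖u‖ = 1) :
    ∃ b, 0 < b ∧ b ≤ Metric.diam K ∧ (∀ t ∈ Ico 0 b, x + t • u ∈ interior K) ∧
      x + b • u ∈ frontier K := by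
  set γ : ℝ → E := fun t => x + t • u
  have hγ : Continuous γ := by fun_prop
  have hdist : ∀ t, dist (γ t) x = |t| := fun t => by
    simp [γ, dist_eq_norm, norm_smul, hu]
  set T := Ici 0 ∩ γ ⁻¹' (interior K)ᶜ
  have hT : T.Nonempty := by
    refine ⟨Metric.diam K + 1, mem_Ici.mpr (by positivity), fun h => ?_⟩
    have := Metric.dist_le_diam_of_mem hK (interior_subset h) (interior_subset hx)
    rw [hdist, abs_of_pos (by positivity)] at this
    linarith
  have hTbdd : BddBelow T := ⟨0, fun t ht => ht.1⟩
  have hTb : sInf T ∈ T :=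
    (isClosed_Ici.inter (isOpen_interior.isClosed_compl.preimage hγ)).csInf_mem hT hTbdd
  have hseg : ∀ t ∈ Ico 0 (sInf T), γ t ∈ interior K := fun t ht => by
    by_contra h
    exact (csInf_le hTbdd ⟨ht.1, h⟩).not_gt ht.2
  have hpos : 0 < sInf T := lt_of_le_of_ne hTb.1 fun h => hTb.2 (by simpa [γ, ← h] using hx)
  have hcl : γ (sInf T) ∈ closure K :=
    map_mem_closure hγ (by simp [closure_Ico hpos.ne, hpos.le]) fun t ht =>
      interior_subset (hseg t ht)
  refine ⟨sInf T, hpos, ?_, hseg, hcl, hTb.2⟩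
  have := Metric.dist_le_diam_of_mem hK.closure hcl (subset_closure (interior_subset hx))
  rwa [hdist, abs_of_pos hpos, Metric.diam_closure] at this

theorem hessian_eigenvalue_lower_bound_general
    {n : ℕ} (K : Set (EuclideanSpace ℝ (Fin n)))
    (hKcomp : IsCompact K)
    (R : EuclideanSpace ℝ (Fin n) → ℝ)
    (hsmooth : ContDiffOn ℝ 3 R (interior K))
    (hbarrier : ∀ y ∈ frontier K,
      Tendsto R (nhdsWithin y (interior K)) atTop)
    (hSC : ∀ x ∈ interior K, ∀ h : EuclideanSpace ℝ (Fin n),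
      |iteratedDeriv 3 (fun t : ℝ => R (x + t • h)) 0| ≤
        2 * (iteratedDeriv 2 (fun t : ℝ => R (x + t • h)) 0) ^ ((3 : ℝ) / 2)) :
    ∀ x ∈ interior K, ∀ u : EuclideanSpace ℝ (Fin n), ‖u‖ = 1 →
      1 / (Metric.diam K) ^ 2 ≤ iteratedDeriv 2 (fun t : ℝ => R (x + t • u)) 0 := by
  intro x hx u hu
  by_contra! hlt
  obtain ⟨b, hb, hbΔ, hseg, hfront⟩ := exists_frontier_mem_ray hKcomp.isBounded hx hu
  set f := fun t : ℝ => R (x + t • u)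
  set U := {t : ℝ | x + t • u ∈ interior K}
  have hU : IsOpen U := isOpen_interior.preimage (by fun_prop)
  have hf : ContDiffOn ℝ 3 f U :=
    hsmooth.comp (by fun_prop : ContDiff ℝ 3 fun t : ℝ => x + t • u).contDiffOn fun _ ht => ht
  have hderiv : ∀ k < 3, ∀ t ∈ Ico 0 b,
      HasDerivAt (iteratedDeriv k f) (iteratedDeriv (k + 1) f t) t :=
    fun k hk t ht => hf.hasDerivAt_iteratedDeriv hU (by exact_mod_cast hk) (hseg t ht)
  have hSCf : ∀ t ∈ Ico 0 b, iteratedDeriv 3 f t ≤ 2 * iteratedDeriv 2 f t ^ ((3 : ℝ) / 2) :=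
    fun t ht => by
      simpa only [iteratedDeriv_comp_add_smul_shift] using
        (le_abs_self _).trans (hSC _ (hseg t ht) u)
  have h0 : iteratedDeriv 2 f 0 < (b ^ 2)⁻¹ := hlt.trans_le (by rw [one_div]; gcongr)
  obtain ⟨M, hM⟩ := bddAbove_image_Ico_of_selfConcordant hb
    (by simpa only [iteratedDeriv_zero] using hderiv 0 (by norm_num))
    (hderiv 1 (by norm_num)) (hderiv 2 (by norm_num)) hSCf h0
  have htend : Tendsto f (𝓝[<] b) atTop :=
    (hbarrier _ hfront).comp <| tendsto_nhdsWithin_iff.mpr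
      ⟨((by fun_prop : Continuous fun t : ℝ => x + t • u).tendsto b).mono_left nhdsWithin_le_nhds,
        eventually_of_mem (Ioo_mem_nhdsLT hb) fun t ht => hseg t (Ioo_subset_Ico_self ht)⟩
  obtain ⟨t, hMt, ht⟩ := ((htend.eventually_gt_atTop M).and (Ioo_mem_nhdsLT hb)).exists
  exact (hM ⟨t, Ioo_subset_Ico_self ht, rfl⟩).not_gt hMt

/-- Eigenvalue lower bound for the Hessian of a self-concordant barrier:
for every `x ∈ int K` and unit direction `u`, the second derivative of
`t ↦ R (x + t • u)` at `0` (the quadratic form of the Hessian at `u`) is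
at least `1 / Δ²`, where `Δ = diam K`. -/
theorem hessian_eigenvalue_lower_bound
    {n : ℕ} (K : Set (EuclideanSpace ℝ (Fin n)))
    (hKcomp : IsCompact K) (hKconv : Convex ℝ K)
    (R : EuclideanSpace ℝ (Fin n) → ℝ)
    (hsmooth : ContDiffOn ℝ 3 R (interior K))
    (hbarrier : ∀ y ∈ frontier K,
      Tendsto R (nhdsWithin y (interior K)) atTop)
    (hSC : ∀ x ∈ interior K, ∀ h : EuclideanSpace ℝ (Fin n),
      |iteratedDeriv 3 (fun t : ℝ => R (x + t • h)) 0| ≤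
        2 * (iteratedDeriv 2 (fun t : ℝ => R (x + t • h)) 0) ^ ((3 : ℝ) / 2)) :
    ∀ x ∈ interior K, ∀ u : EuclideanSpace ℝ (Fin n), ‖u‖ = 1 →
      1 / (Metric.diam K) ^ 2 ≤ iteratedDeriv 2 (fun t : ℝ => R (x + t • u)) 0 :=
  hessian_eigenvalue_lower_bound_general K hKcomp R hsmooth hbarrier hSC
end

section
/- Let R be a self-concordant barrier for a compact convex set K of diameter Δ, x ∈ int K, g ∈ ℝⁿ with ‖g‖ ≤ G, and 0 < η < 1/(Δ‖g‖). Then x − η[∇²R(x)]⁻¹g ∈ int K. -/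
open Matrix

/-- Validity of the interior-point step: if `0 < η < 1/(Δ‖g‖)` then
`x - η [∇²R(x)]⁻¹ g ∈ int K`. -/
theorem ip_step_valid
    {n : ℕ} (K : Set (Fin n → ℝ)) (hKconv : Convex ℝ K) (hKcomp : IsCompact K)
    (Δ : ℝ) (hΔdiam : Δ = Metric.diam K) (hΔ : 0 < Δ)
    (x : Fin n → ℝ) (hx : x ∈ interior K)
    (H : Matrix (Fin n) (Fin n) ℝ) (hH : H.PosDef)
    -- the Dikin ellipsoid of radius 1 at `x` is contained in `int K`:
    (hDikin : ∀ h : Fin n → ℝ, h ⬝ᵥ H *ᵥ h < 1 → x + h ∈ interior K)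
    -- all eigenvalues of `H⁻¹` are at most `Δ²`:
    (hEig : ∀ v : Fin n → ℝ, v ⬝ᵥ H⁻¹ *ᵥ v ≤ Δ ^ 2 * (v ⬝ᵥ v))
    (g : Fin n → ℝ) (G : ℝ) (hg : Real.sqrt (g ⬝ᵥ g) ≤ G)
    (η : ℝ) (hη0 : 0 < η) (hη : η * (Δ * Real.sqrt (g ⬝ᵥ g)) < 1) :
    x - η • H⁻¹ *ᵥ g ∈ interior K := by
  have hs : (0:ℝ) ≤ g ⬝ᵥ g := by
    unfold dotProduct
    exact Finset.sum_nonneg fun i _ => mul_self_nonneg _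
  have hdet : IsUnit H.det := isUnit_iff_ne_zero.mpr hH.det_pos.ne'
  have hinv : H * H⁻¹ = 1 := Matrix.mul_nonsing_inv H hdet
  set u : Fin n → ℝ := H⁻¹ *ᵥ g with hu
  have hHu : H *ᵥ u = g := by
    rw [hu, Matrix.mulVec_mulVec, hinv, Matrix.one_mulVec]
  have key : (-(η • u)) ⬝ᵥ H *ᵥ (-(η • u)) = η ^ 2 * (g ⬝ᵥ H⁻¹ *ᵥ g) := by
    rw [Matrix.mulVec_neg, Matrix.mulVec_smul, hHu]
    rw [neg_dotProduct, dotProduct_neg, neg_neg,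
      smul_dotProduct, dotProduct_smul, smul_eq_mul, smul_eq_mul,
      dotProduct_comm]
    ring
  have hlt : (-(η • u)) ⬝ᵥ H *ᵥ (-(η • u)) < 1 := by
    rw [key]
    have h1 : η ^ 2 * (g ⬝ᵥ H⁻¹ *ᵥ g) ≤ η ^ 2 * (Δ ^ 2 * (g ⬝ᵥ g)) :=
      mul_le_mul_of_nonneg_left (hEig g) (sq_nonneg η)
    have h2 : η ^ 2 * (Δ ^ 2 * (g ⬝ᵥ g)) = (η * (Δ * Real.sqrt (g ⬝ᵥ g))) ^ 2 := by
      rw [mul_pow, mul_pow, Real.sq_sqrt hs]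
    have h3 : (η * (Δ * Real.sqrt (g ⬝ᵥ g))) ^ 2 < 1 := by
      have hnn : 0 ≤ η * (Δ * Real.sqrt (g ⬝ᵥ g)) :=
        mul_nonneg hη0.le (mul_nonneg hΔ.le (Real.sqrt_nonneg _))
      nlinarith
    linarith
  have := hDikin _ hlt
  have hx : x + -(η • u) = x - η • H⁻¹ *ᵥ g := by
    rw [hu]; abel
  rwa [hx] at this
end

section
/- Let M be a symmetric positive definite matrix and M_z a symmetric matrix satisfying (1−c)²M ⪯ M_z ⪯ (1−c)⁻²M for some 0 < c < 1/4. Then every eigenvalue of B = M⁻¹M_z − I lies in the interval [−2c, 4c]. -/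
open Matrix

/-- If `(1-c)² M ⪯ M_z ⪯ (1-c)⁻² M` with `M` symmetric positive definite,
`M_z` symmetric, and `0 < c < 1/4`, then every (real) eigenvalue of
`B = M⁻¹ M_z - I` lies in `[-2c, 4c]`. -/
theorem eigenvalue_bound_of_hessian_sandwich
    {n : ℕ} (M Mz : Matrix (Fin n) (Fin n) ℝ)
    (hM : M.PosDef) (hMz : Mz.IsSymm)
    (c : ℝ) (hc0 : 0 < c) (hc : c < 1 / 4)
    (hlow : (Mz - (1 - c) ^ 2 • M).PosSemidef)
    (hhigh : (((1 - c) ^ 2)⁻¹ • M - Mz).PosSemidef) :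
    ∀ μ : ℝ, Module.End.HasEigenvalue (Matrix.toLin' (M⁻¹ * Mz - 1)) μ →
      -2 * c ≤ μ ∧ μ ≤ 4 * c := by
  intro μ hμ
  obtain ⟨v, hv⟩ := hμ.exists_hasEigenvector
  have hvne : v ≠ 0 := hv.right
  have happ : (M⁻¹ * Mz - 1).mulVec v = μ • v := by
    have := hv.apply_eq_smul
    rwa [Matrix.toLin'_apply] at this
  have h1 : (M⁻¹ * Mz).mulVec v = (1 + μ) • v := by
    have : (M⁻¹ * Mz).mulVec v - v = μ • v := by
      rw [← happ, Matrix.sub_mulVec, Matrix.one_mulVec]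
    have := sub_eq_iff_eq_add.mp this
    rw [this]
    ext i
    simp [Pi.smul_apply]
    ring
  have hdet : IsUnit M.det := isUnit_iff_ne_zero.mpr hM.det_pos.ne'
  have key : Mz.mulVec v = (1 + μ) • M.mulVec v := by
    have h2 : M.mulVec ((M⁻¹ * Mz).mulVec v) = Mz.mulVec v := by
      rw [Matrix.mulVec_mulVec, ← Matrix.mul_assoc, Matrix.mul_nonsing_inv M hdet,
        Matrix.one_mul]
    rw [← h2, h1, Matrix.mulVec_smul]
  set a := v ⬝ᵥ M.mulVec v with ha
  have hapos : 0 < a := hM.re_dotProduct_pos hvne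
  have hb : v ⬝ᵥ Mz.mulVec v = (1 + μ) * a := by
    rw [key, dotProduct_smul, smul_eq_mul, ha]
  have hl : 0 ≤ (1 + μ) * a - (1 - c) ^ 2 * a := by
    have := hlow.re_dotProduct_nonneg v
    simpa [Matrix.sub_mulVec, Matrix.smul_mulVec, dotProduct_sub,
      dotProduct_smul, hb, ← ha, smul_eq_mul] using this
  have hh : 0 ≤ ((1 - c) ^ 2)⁻¹ * a - (1 + μ) * a := by
    have := hhigh.re_dotProduct_nonneg v
    simpa [Matrix.sub_mulVec, Matrix.smul_mulVec, dotProduct_sub,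
      dotProduct_smul, hb, ← ha, smul_eq_mul] using this
  have hc1 : (0:ℝ) < 1 - c := by linarith
  have hcne : (0:ℝ) < (1 - c) ^ 2 := by positivity
  have hlow' : (1 - c) ^ 2 ≤ 1 + μ := by
    nlinarith
  have hhigh' : (1 + μ) * (1 - c) ^ 2 ≤ 1 := by
    have h3 : (1 + μ) ≤ ((1 - c) ^ 2)⁻¹ := by nlinarith
    calc (1 + μ) * (1 - c) ^ 2 ≤ ((1 - c) ^ 2)⁻¹ * (1 - c) ^ 2 := by nlinarith
    _ = 1 := inv_mul_cancel₀ hcne.ne'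
  constructor
  · nlinarith
  · nlinarith [mul_pos hc0 hc0, mul_pos (mul_pos hc0 hc0) hc0, hhigh']
end

section
/- Let R be a ϑ-self-concordant barrier for K, x ∈ int K, and u a unit vector with uᵀ∇R(x) > 0. Let t_max(x,u) = max{t : x + tu ∈ K}. Then uᵀ∇R(x) ≤ ϑ / t_max(x,u). -/
open Filter

/-- For a `ϑ`-self-concordant barrier `R`, a point `x ∈ int K` and a unit
direction `u` with `uᵀ∇R(x) > 0` (expressed via the line restriction
`β t = R (x + t • u)`): `uᵀ∇R(x) = β'(0) ≤ ϑ / t_max(x,u)`. -/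
theorem directional_derivative_barrier_bound
    {n : ℕ} (K : Set (EuclideanSpace ℝ (Fin n)))
    (hKcomp : IsCompact K) (hKconv : Convex ℝ K)
    (R : EuclideanSpace ℝ (Fin n) → ℝ) (ϑ : ℝ) (hϑ : 0 < ϑ)
    (x : EuclideanSpace ℝ (Fin n)) (hx : x ∈ interior K)
    (u : EuclideanSpace ℝ (Fin n)) (hu : ‖u‖ = 1)
    (tmax : ℝ) (htmax : IsGreatest {t : ℝ | x + t • u ∈ K} tmax)
    (hsmooth : ContDiffOn ℝ 2 (fun t : ℝ => R (x + t • u)) (Set.Ico 0 tmax))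
    -- the `ϑ`-self-concordant-barrier inequality `[β'(t)]² ≤ ϑ β''(t)` along the line:
    (hSCB : ∀ t ∈ Set.Ico (0 : ℝ) tmax,
      (deriv (fun s : ℝ => R (x + s • u)) t) ^ 2 ≤
        ϑ * deriv (deriv (fun s : ℝ => R (x + s • u))) t)
    -- barrier property: `β(t) → ∞` as `t → t_max` from the left:
    (hbarrier : Tendsto (fun t : ℝ => R (x + t • u))
      (nhdsWithin tmax (Set.Iio tmax)) atTop)
    -- in fact `β'(t) → ∞` as `t → t_max` from the left:
    (hbarrier' : Tendsto (deriv (fun s : ℝ => R (x + s • u)))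
      (nhdsWithin tmax (Set.Iio tmax)) atTop)
    (hpos : 0 < deriv (fun s : ℝ => R (x + s • u)) 0) :
    deriv (fun s : ℝ => R (x + s • u)) 0 ≤ ϑ / tmax := by
  set β : ℝ → ℝ := fun s => R (x + s • u) with hβ
  set g : ℝ → ℝ := deriv β with hg
  set D : Set ℝ := Set.Ico 0 tmax with hD
  -- tmax is positive
  have htpos : 0 < tmax := by
    obtain ⟨ε, hε, hball⟩ := Metric.mem_nhds_iff.1 (mem_interior_iff_mem_nhds.1 hx)
    have hmem : (ε / 2) ∈ {t : ℝ | x + t • u ∈ K} := by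
      apply hball
      simp only [Metric.mem_ball, dist_eq_norm]
      have : x + (ε / 2) • u - x = (ε / 2) • u := by abel
      rw [this, norm_smul, hu]
      simp only [Real.norm_eq_abs, mul_one]
      rw [abs_of_pos (by linarith)]
      linarith
    have := htmax.2 hmem
    linarith
  have hUD : UniqueDiffOn ℝ D := uniqueDiffOn_Ico 0 tmax
  -- β is differentiable at 0 (two-sided), since otherwise deriv β 0 = 0
  have hdiff0 : DifferentiableAt ℝ β 0 := by
    by_contra h
    have h0 : g 0 = 0 := deriv_zero_of_not_differentiableAt h
    rw [h0] at hpos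
    exact lt_irrefl 0 hpos
  -- derivWithin β D agrees with g = deriv β on D
  have hEq : Set.EqOn (derivWithin β D) g D := by
    intro t ht
    rcases eq_or_lt_of_le ht.1 with h0 | h0
    · subst h0
      exact hdiff0.derivWithin (hUD 0 ⟨le_refl 0, htpos⟩)
    · exact derivWithin_of_mem_nhds (Ico_mem_nhds h0 ht.2)
  have hdw : ContDiffOn ℝ 1 (derivWithin β D) D :=
    hsmooth.derivWithin hUD (by norm_num)
  -- g is continuous on D
  have hgcont : ContinuousOn g D := (hdw.continuousOn).congr fun t ht => (hEq ht).symm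
  -- g is differentiable at interior points of D
  have hgdiff : ∀ t ∈ Set.Ioo (0 : ℝ) tmax, DifferentiableAt ℝ g t := by
    intro t ht
    have hDnhds : D ∈ nhds t := Ico_mem_nhds ht.1 ht.2
    have h1 : DifferentiableAt ℝ (derivWithin β D) t :=
      ((hdw.differentiableOn (by norm_num)) t ⟨le_of_lt ht.1, ht.2⟩).differentiableAt hDnhds
    have h2 : derivWithin β D =ᶠ[nhds t] g :=
      Filter.eventuallyEq_of_mem hDnhds hEq
    exact h1.congr_of_eventuallyEq h2.symm
  have hintD : interior D = Set.Ioo 0 tmax := interior_Ico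
  -- deriv g ≥ 0 on the interior, so g is monotone
  have hderivg_nonneg : ∀ t ∈ Set.Ioo (0 : ℝ) tmax, 0 ≤ deriv g t := by
    intro t ht
    have h := hSCB t ⟨le_of_lt ht.1, ht.2⟩
    nlinarith [sq_nonneg (g t)]
  have hmono : MonotoneOn g D := by
    apply monotoneOn_of_deriv_nonneg (convex_Ico 0 tmax) hgcont
    · rw [hintD]; exact fun t ht => (hgdiff t ht).differentiableWithinAt
    · rw [hintD]; exact hderivg_nonneg
  have h0D : (0 : ℝ) ∈ D := ⟨le_refl 0, htpos⟩
  -- g is positive on D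
  have hgpos : ∀ t ∈ D, 0 < g t := fun t ht =>
    lt_of_lt_of_le hpos (hmono h0D ht ht.1)
  -- the auxiliary function φ t = t + ϑ / g t is antitone on D
  set φ : ℝ → ℝ := fun s => s + ϑ * (g s)⁻¹ with hφ
  have hφcont : ContinuousOn φ D :=
    (continuousOn_id).add (continuousOn_const.mul
      (hgcont.inv₀ fun t ht => ne_of_gt (hgpos t ht)))
  have hφderiv : ∀ t ∈ Set.Ioo (0 : ℝ) tmax,
      HasDerivAt φ (1 + ϑ * (-(deriv g t) / g t ^ 2)) t := by
    intro t ht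
    have hne : g t ≠ 0 := ne_of_gt (hgpos t ⟨le_of_lt ht.1, ht.2⟩)
    exact (hasDerivAt_id t).add
      (((hgdiff t ht).hasDerivAt.inv hne).const_mul ϑ)
  have hφanti : AntitoneOn φ D := by
    apply antitoneOn_of_deriv_nonpos (convex_Ico 0 tmax) hφcont
    · rw [hintD]
      exact fun t ht => ((hφderiv t ht).differentiableAt).differentiableWithinAt
    · rw [hintD]
      intro t ht
      rw [(hφderiv t ht).deriv]
      have htD : t ∈ D := ⟨le_of_lt ht.1, ht.2⟩
      have hSQ : g t ^ 2 ≤ ϑ * deriv g t := hSCB t htD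
      have hA : 0 < g t := hgpos t htD
      have hA2 : (0 : ℝ) < g t ^ 2 := by positivity
      have key : 1 ≤ ϑ * deriv g t / g t ^ 2 := (one_le_div hA2).mpr hSQ
      have : ϑ * (-(deriv g t) / g t ^ 2) = -(ϑ * deriv g t / g t ^ 2) := by ring
      rw [this]
      linarith
  -- for every t ∈ D, t ≤ ϑ / g 0
  have hkey : ∀ t ∈ D, t ≤ ϑ * (g 0)⁻¹ := by
    intro t ht
    have h1 : φ t ≤ φ 0 := hφanti h0D ht ht.1
    have h2 : 0 < ϑ * (g t)⁻¹ := by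
      have := hgpos t ht; positivity
    simp only [hφ, zero_add] at h1
    linarith
  -- hence tmax ≤ ϑ / g 0
  have htmax_le : tmax ≤ ϑ * (g 0)⁻¹ := by
    by_contra h
    push_neg at h
    have hg0 : 0 < g 0 := hpos
    have hcpos : 0 < ϑ * (g 0)⁻¹ := by positivity
    set c : ℝ := (ϑ * (g 0)⁻¹ + tmax) / 2 with hc
    have hc1 : ϑ * (g 0)⁻¹ < c := by rw [hc]; linarith
    have hc2 : c < tmax := by rw [hc]; linarith
    have hcD : c ∈ D := ⟨by linarith, hc2⟩
    have := hkey c hcD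
    linarith
  -- conclude
  have hg0 : 0 < g 0 := hpos
  rw [le_div_iff₀ htpos]
  calc g 0 * tmax ≤ g 0 * (ϑ * (g 0)⁻¹) := by
        apply mul_le_mul_of_nonneg_left htmax_le (le_of_lt hg0)
    _ = ϑ := by field_simp
end

section
/- Suppose a sequence x₁,…,x_T in a convex set K and convex differentiable functions f₁,…,f_T satisfy: (i) f_t(x_t) − f_t(x*) ≤ ∇f_t(x_t)ᵀ(x_t − x*); (ii) η∇f_t(x_t)ᵀ(x_t − x*) ≤ [∇R(x_{t+1}) − ∇R(x_t)]ᵀ(x* − x_t) + 8G²Δ²η²; (iii) B_R(x_t, x_{t+1}) ≤ 2η²G²Δ²; and (iv) B_R(x*, x₁) ≤ D². Then the regret satisfies Σ_t [f_t(x_t) − f_t(x*)] ≤ D²/η + 10G²Δ²Tη, and in particular for η = D/(√10 GΔ√T) the regret is at most 2√10 · DGΔ√T. -/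
/-!
By the three-point identity, the right-hand side of each per-step inequality (ii) is
`B(x*, x_t) - B(x*, x_{t+1}) + B(x_t, x_{t+1})`. Summing over `t` telescopes; the final
`-B(x*, x_T)` is dropped since Bregman divergences of a convex differentiable function are
nonnegative, and (iii), (iv) bound the rest, so `η · regret ≤ D² + 10G²Δ²Tη²`. With
`c = √10 GΔ√T` the tuned step is `η = D / c`, which balances `D²/η = c²η = Dc`.
-/

open Finset InnerProductSpace

theorem ConvexOn.apply_sub_le_of_hasFDerivAt {F : Type*} [NormedAddCommGroup F]
    [NormedSpace ℝ F] {φ : F → ℝ} {φ' : F →L[ℝ] ℝ} {b : F} (hφ : ConvexOn ℝ Set.univ φ)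
    (hb : HasFDerivAt φ φ' b) (a : F) : φ' (a - b) ≤ φ a - φ b := by
  let ℓ : ℝ →ᵃ[ℝ] F := AffineMap.lineMap b a
  have hconv : ConvexOn ℝ Set.univ (φ ∘ ℓ) := by simpa using hφ.comp_affineMap ℓ
  have hℓ : HasDerivAt ℓ (a - b) 0 := by
    have hℓ_eq : ⇑ℓ = fun s => s • (a - b) + b :=
      funext fun s => AffineMap.lineMap_apply_module' b a s
    simpa [hℓ_eq] using ((hasDerivAt_id (0 : ℝ)).smul_const (a - b)).add_const b
  have hderiv : HasDerivAt (φ ∘ ℓ) (φ' (a - b)) 0 := by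
    have hb' : HasFDerivAt φ φ' (ℓ 0) := by simpa [ℓ] using hb
    exact hb'.comp_hasDerivAt 0 hℓ
  simpa [slope_def_field, ℓ] using
    hconv.le_slope_of_hasDerivWithinAt_Ioi (Set.mem_univ 0) (Set.mem_univ 1) one_pos
      hderiv.hasDerivWithinAt

section Bregman

variable {E : Type*} [NormedAddCommGroup E] [InnerProductSpace ℝ E]

theorem ConvexOn.inner_sub_le_of_hasGradientAt [CompleteSpace E] {φ : E → ℝ} {g b : E}
    (hφ : ConvexOn ℝ Set.univ φ) (hb : HasGradientAt φ g b) (a : E) :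
    ⟪g, a - b⟫_ℝ ≤ φ a - φ b := by
  simpa using hφ.apply_sub_le_of_hasFDerivAt hb.hasFDerivAt a

def bregmanDiv (R : E → ℝ) (gR : E → E) (a b : E) : ℝ :=
  R a - R b - ⟪gR b, a - b⟫_ℝ

variable {R : E → ℝ} {gR : E → E}

theorem bregmanDiv_nonneg [CompleteSpace E] (hR : ConvexOn ℝ Set.univ R) {b : E}
    (hb : HasGradientAt R (gR b) b) (a : E) : 0 ≤ bregmanDiv R gR a b :=
  sub_nonneg.2 (hR.inner_sub_le_of_hasGradientAt hb a)

theorem bregmanDiv_three_point (a b c : E) :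
    bregmanDiv R gR a b - bregmanDiv R gR a c + bregmanDiv R gR b c =
      ⟪gR c - gR b, a - b⟫_ℝ := by
  simp only [bregmanDiv, inner_sub_left, inner_sub_right]
  ring

theorem sum_range_inner_gradient_sub (x : ℕ → E) (a : E) (T : ℕ) :
    ∑ t ∈ range T, ⟪gR (x (t + 1)) - gR (x t), a - x t⟫_ℝ =
      bregmanDiv R gR a (x 0) - bregmanDiv R gR a (x T) +
        ∑ t ∈ range T, bregmanDiv R gR (x t) (x (t + 1)) := by
  rw [← sum_congr rfl fun t _ => bregmanDiv_three_point (R := R) a (x t) (x (t + 1)),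
    sum_add_distrib, sum_range_sub' (fun t => bregmanDiv R gR a (x t))]

theorem mul_sum_inner_le_of_mirror_step [CompleteSpace E] (hR : ConvexOn ℝ Set.univ R)
    (hgR : ∀ w, HasGradientAt R (gR w) w) {x : ℕ → E} {a : E} {g : ℕ → E} {T : ℕ}
    {η ε δ : ℝ}
    (hstep : ∀ t ∈ range T,
      η * ⟪g t, x t - a⟫_ℝ ≤ ⟪gR (x (t + 1)) - gR (x t), a - x t⟫_ℝ + ε)
    (hdiv : ∀ t ∈ range T, bregmanDiv R gR (x t) (x (t + 1)) ≤ δ) :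
    η * ∑ t ∈ range T, ⟪g t, x t - a⟫_ℝ ≤ bregmanDiv R gR a (x 0) + T * (δ + ε) := by
  have hlast := bregmanDiv_nonneg hR (hgR (x T)) a
  have hdivsum : ∑ t ∈ range T, bregmanDiv R gR (x t) (x (t + 1)) ≤ T * δ := by
    simpa using sum_le_sum hdiv
  calc η * ∑ t ∈ range T, ⟪g t, x t - a⟫_ℝ
      ≤ ∑ t ∈ range T, (⟪gR (x (t + 1)) - gR (x t), a - x t⟫_ℝ + ε) := by
        rw [mul_sum]; exact sum_le_sum hstep
    _ = bregmanDiv R gR a (x 0) - bregmanDiv R gR a (x T) +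
          ∑ t ∈ range T, bregmanDiv R gR (x t) (x (t + 1)) + T * ε := by
        rw [sum_add_distrib, sum_range_inner_gradient_sub (R := R)]; simp
    _ ≤ bregmanDiv R gR a (x 0) + T * (δ + ε) := by linarith

end Bregman

theorem sq_div_div_add_sq_mul_div (D c : ℝ) : D ^ 2 / (D / c) + c ^ 2 * (D / c) = 2 * D * c := by
  rcases eq_or_ne D 0 with rfl | hD
  · simp
  rcases eq_or_ne c 0 with rfl | hc
  · simp
  field_simp
  ring

theorem regret_bound_general
    {n : ℕ}
    (R : EuclideanSpace ℝ (Fin n) → ℝ)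
    (gR : EuclideanSpace ℝ (Fin n) → EuclideanSpace ℝ (Fin n))
    (hRconv : ConvexOn ℝ Set.univ R)
    (hRgrad : ∀ w, HasGradientAt R (gR w) w)
    (T : ℕ)
    (f : ℕ → EuclideanSpace ℝ (Fin n) → ℝ)
    (gf : ℕ → EuclideanSpace ℝ (Fin n) → EuclideanSpace ℝ (Fin n))
    (x : ℕ → EuclideanSpace ℝ (Fin n))
    (xstar : EuclideanSpace ℝ (Fin n))
    (G Δ D η : ℝ) (hη : 0 < η)
    -- Bregman divergence:
    (B : EuclideanSpace ℝ (Fin n) → EuclideanSpace ℝ (Fin n) → ℝ)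
    (hB : ∀ a b, B a b = R a - R b - (inner ℝ (gR b) (a - b) : ℝ))
    -- (i) convexity bound:
    (h1 : ∀ t ∈ Finset.range T,
      f t (x t) - f t xstar ≤ (inner ℝ (gf t (x t)) (x t - xstar) : ℝ))
    -- (ii) per-step inequality:
    (h2 : ∀ t ∈ Finset.range T,
      η * (inner ℝ (gf t (x t)) (x t - xstar) : ℝ) ≤
        (inner ℝ (gR (x (t + 1)) - gR (x t)) (xstar - x t) : ℝ) +
          8 * G ^ 2 * Δ ^ 2 * η ^ 2)
    -- (iii) step Bregman bound:
    (h3 : ∀ t ∈ Finset.range T, B (x t) (x (t + 1)) ≤ 2 * η ^ 2 * G ^ 2 * Δ ^ 2)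
    -- (iv) initial Bregman bound:
    (h4 : B xstar (x 0) ≤ D ^ 2) :
    (∑ t ∈ Finset.range T, (f t (x t) - f t xstar)) ≤
        D ^ 2 / η + 10 * G ^ 2 * Δ ^ 2 * T * η ∧
      (η = D / (Real.sqrt 10 * G * Δ) * (1 / Real.sqrt T) →
        (∑ t ∈ Finset.range T, (f t (x t) - f t xstar)) ≤
          2 * Real.sqrt 10 * D * G * Δ * Real.sqrt T) := by
  obtain rfl : B = bregmanDiv R gR := funext fun a => funext fun b => hB a b
  have hlinear := mul_sum_inner_le_of_mirror_step hRconv hRgrad h2 h3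
  have hregret : η * ∑ t ∈ range T, (f t (x t) - f t xstar) ≤
      D ^ 2 + 10 * G ^ 2 * Δ ^ 2 * T * η ^ 2 :=
    calc _ ≤ η * ∑ t ∈ range T, ⟪gf t (x t), x t - xstar⟫_ℝ :=
          mul_le_mul_of_nonneg_left (sum_le_sum h1) hη.le
      _ ≤ _ := by linarith
  have hbound : ∑ t ∈ range T, (f t (x t) - f t xstar) ≤
      D ^ 2 / η + 10 * G ^ 2 * Δ ^ 2 * T * η := by
    rw [div_add' _ _ _ hη.ne', le_div_iff₀ hη]
    linarith
  refine ⟨hbound, fun hη_eq => hbound.trans_eq ?_⟩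
  set c := Real.sqrt 10 * G * Δ * Real.sqrt T
  have hc : 10 * G ^ 2 * Δ ^ 2 * T = c ^ 2 := by
    simp only [c, mul_pow, Real.sq_sqrt (by norm_num : (0 : ℝ) ≤ 10),
      Real.sq_sqrt T.cast_nonneg]
  rw [hη_eq, div_mul_div_comm, mul_one, hc, sq_div_div_add_sq_mul_div]
  ring

/-- Regret bound of the interior-point algorithm, given the per-step bounds:
the regret is at most `D²/η + 10G²Δ²Tη`, and with
`η = D/(√10 GΔ√T)` it is at most `2√10 · DGΔ√T`. -/
theorem regret_bound
    {n : ℕ} (K : Set (EuclideanSpace ℝ (Fin n))) (hKconv : Convex ℝ K)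
    (R : EuclideanSpace ℝ (Fin n) → ℝ)
    (gR : EuclideanSpace ℝ (Fin n) → EuclideanSpace ℝ (Fin n))
    (hRconv : ConvexOn ℝ Set.univ R)
    (hRgrad : ∀ w, HasGradientAt R (gR w) w)
    (T : ℕ) (hT : 0 < T)
    (f : ℕ → EuclideanSpace ℝ (Fin n) → ℝ)
    (gf : ℕ → EuclideanSpace ℝ (Fin n) → EuclideanSpace ℝ (Fin n))
    (hfconv : ∀ t, ConvexOn ℝ Set.univ (f t))
    (hfgrad : ∀ t w, HasGradientAt (f t) (gf t w) w)
    (x : ℕ → EuclideanSpace ℝ (Fin n)) (hxK : ∀ t, x t ∈ K)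
    (xstar : EuclideanSpace ℝ (Fin n)) (hxstar : xstar ∈ K)
    (G Δ D η : ℝ) (hG : 0 < G) (hΔ : 0 < Δ) (hD : 0 < D) (hη : 0 < η)
    -- Bregman divergence:
    (B : EuclideanSpace ℝ (Fin n) → EuclideanSpace ℝ (Fin n) → ℝ)
    (hB : ∀ a b, B a b = R a - R b - (inner ℝ (gR b) (a - b) : ℝ))
    -- (i) convexity bound:
    (h1 : ∀ t ∈ Finset.range T,
      f t (x t) - f t xstar ≤ (inner ℝ (gf t (x t)) (x t - xstar) : ℝ))
    -- (ii) per-step inequality: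
    (h2 : ∀ t ∈ Finset.range T,
      η * (inner ℝ (gf t (x t)) (x t - xstar) : ℝ) ≤
        (inner ℝ (gR (x (t + 1)) - gR (x t)) (xstar - x t) : ℝ) +
          8 * G ^ 2 * Δ ^ 2 * η ^ 2)
    -- (iii) step Bregman bound:
    (h3 : ∀ t ∈ Finset.range T, B (x t) (x (t + 1)) ≤ 2 * η ^ 2 * G ^ 2 * Δ ^ 2)
    -- (iv) initial Bregman bound:
    (h4 : B xstar (x 0) ≤ D ^ 2) :
    (∑ t ∈ Finset.range T, (f t (x t) - f t xstar)) ≤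
        D ^ 2 / η + 10 * G ^ 2 * Δ ^ 2 * T * η ∧
      (η = D / (Real.sqrt 10 * G * Δ) * (1 / Real.sqrt T) →
        (∑ t ∈ Finset.range T, (f t (x t) - f t xstar)) ≤
          2 * Real.sqrt 10 * D * G * Δ * Real.sqrt T) :=
  regret_bound_general R gR hRconv hRgrad T f gf x xstar G Δ D η hη B hB h1 h2 h3 h4
end
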